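/- Let A be a based ring and M a based module over A with finite basis {m_i}_{i∈I}. If M is indecomposable as a Z_+-module over A, then M is irreducible as a Z_+-module over A. -/

import Mathlib

open scoped BigOperators

/-- A ℤ₊-module over a ring A with fixed ℤ-basis b. -/
structure ZPlusModule {A : Type} [Ring A] {ι : Type} (b : Module.Basis ι ℤ A) where
  carrier : Type
  [acg : AddCommGroup carrier]
  [mod : Module A carrier]
  κ : Type
  basis : Module.Basis κ ℤ carrier
  nonneg : ∀ (i : ι) (j k : κ), 0 ≤ basis.repr (b i • basis j) k

attribute [instance] ZPlusModule.acg ZPlusModule.mod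

namespace ZPlusModule

variable {A : Type} [Ring A] {ι : Type} {b : Module.Basis ι ℤ A}

/-- M is decomposable if it is equivalent (via a bijection of bases inducing an A-module
isomorphism) to a direct sum of two nonzero ℤ₊-modules. -/
def Decomposable (M : ZPlusModule b) : Prop :=
  ∃ (N₁ N₂ : ZPlusModule b), Nonempty N₁.κ ∧ Nonempty N₂.κ ∧
    ∃ (e : M.κ ≃ (N₁.κ ⊕ N₂.κ)) (f : M.carrier ≃ₗ[A] (N₁.carrier × N₂.carrier)),
      ∀ j, f (M.basis j) =
        Sum.elim (fun a => (N₁.basis a, 0)) (fun a => ((0 : N₁.carrier), N₂.basis a)) (e j)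

/-- Irreducibility: the only ℤ₊-submodules (subsets of the basis whose ℤ-span is an
A-submodule) are 0 and M. -/
def Irred (M : ZPlusModule b) : Prop :=
  ∀ J : Set M.κ,
    (∀ (a : A) (x : M.carrier), x ∈ Submodule.span ℤ (⇑M.basis '' J) →
      a • x ∈ Submodule.span ℤ (⇑M.basis '' J)) → J = ∅ ∨ J = Set.univ

end ZPlusModule

/-! The based-module symmetry `d_{ij}^k = d_{ī k}^j` says that `b_i m_k` has a nonzero
`m_j`-coefficient exactly when `b_ī m_j` has a nonzero `m_k`-coefficient. So if the basis vectors
indexed by `J` span an `A`-submodule, no `b_i m_k` with `k ∉ J` has a component along `J`, and the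
complement `Jᶜ` spans an `A`-submodule too. For `J ≠ ∅, univ`, `M` is then the direct sum of the
two nonzero ℤ₊-submodules, contradicting indecomposability. -/
open Submodule

theorem Submodule.smul_mem_span_of_forall_smul_mem {R S N : Type*} [Semiring R] [Monoid S]
    [AddCommMonoid N] [Module R N] [DistribMulAction S N] [SMulCommClass S R N] {s : Set N}
    (c : S) (h : ∀ y ∈ s, c • y ∈ span R s) {x : N} (hx : x ∈ span R s) :
    c • x ∈ span R s := by
  induction hx using span_induction with
  | mem y hy => exact h y hy
  | zero => simp
  | add y z _ _ hy hz => simpa [smul_add] using add_mem hy hz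
  | smul r y _ hy => simpa [smul_comm c r y] using smul_mem _ r hy

theorem Module.Basis.smul_mem_of_forall_basis_smul_mem {ι A N : Type*} [Ring A] [AddCommGroup N]
    [Module A N] (b : Module.Basis ι ℤ A) (S : Submodule ℤ N) (h : ∀ i, ∀ x ∈ S, b i • x ∈ S)
    (a : A) {x : N} (hx : x ∈ S) : a • x ∈ S := by
  induction b.mem_span a using span_induction with
  | mem a ha => obtain ⟨i, rfl⟩ := ha; exact h i x hx
  | zero => simp
  | add a c _ _ ha hc => simpa [add_smul] using add_mem ha hc
  | smul n a _ ha => rw [smul_assoc]; exact S.smul_mem n ha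

namespace ZPlusModule

variable {A : Type} [Ring A] {ι : Type} {b : Module.Basis ι ℤ A}

def SpansSubmodule (M : ZPlusModule b) (J : Set M.κ) : Prop :=
  ∀ (a : A) (x : M.carrier), x ∈ span ℤ (⇑M.basis '' J) → a • x ∈ span ℤ (⇑M.basis '' J)

def IsBased (M : ZPlusModule b) (bar : ι → ι) : Prop :=
  ∀ (i : ι) (j k : M.κ),
    M.basis.repr (b i • M.basis j) k = M.basis.repr (b (bar i) • M.basis k) j

variable {M : ZPlusModule b} {J : Set M.κ}

theorem spansSubmodule_of_forall_smul_basis_mem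
    (h : ∀ i, ∀ k ∈ J, b i • M.basis k ∈ span ℤ (⇑M.basis '' J)) : M.SpansSubmodule J := by
  refine fun a x hx ↦ b.smul_mem_of_forall_basis_smul_mem _ (fun i y hy ↦ ?_) a hx
  refine smul_mem_span_of_forall_smul_mem _ ?_ hy
  rintro _ ⟨k, hk, rfl⟩
  exact h i k hk

theorem repr_smul_basis_eq_zero {bar : ι → ι} (hbased : M.IsBased bar)
    (hJ : M.SpansSubmodule J) (i : ι) {k j : M.κ} (hk : k ∉ J) (hj : j ∈ J) :
    M.basis.repr (b i • M.basis k) j = 0 := by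
  rw [hbased]
  have hmem := hJ (b (bar i)) _ (subset_span ⟨j, hj, rfl⟩)
  by_contra hne
  exact hk ((Module.Basis.mem_span_image M.basis).1 hmem (Finsupp.mem_support_iff.2 hne))

theorem SpansSubmodule.compl {bar : ι → ι} (hbased : M.IsBased bar)
    (hJ : M.SpansSubmodule J) : M.SpansSubmodule Jᶜ := by
  refine spansSubmodule_of_forall_smul_basis_mem fun i k hk ↦ ?_
  rw [Module.Basis.mem_span_image]
  intro j hj hjJ
  exact Finsupp.mem_support_iff.1 hj (repr_smul_basis_eq_zero hbased hJ i hk hjJ)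

def spanSubmodule (hJ : M.SpansSubmodule J) : Submodule A M.carrier :=
  { span ℤ (⇑M.basis '' J) with smul_mem' := hJ }

noncomputable def spanBasis (hJ : M.SpansSubmodule J) : Module.Basis J ℤ (spanSubmodule hJ) :=
  (Module.Basis.span (M.basis.linearIndependent.comp _ Subtype.val_injective)).map
    (LinearEquiv.ofEq _ _ (by rw [Set.range_comp, Subtype.range_coe]; rfl) ≪≫ₗ
      ((spanSubmodule hJ).restrictScalarsEquiv ℤ).toAddEquiv.toIntLinearEquiv)

theorem coe_spanBasis (hJ : M.SpansSubmodule J) (j : J) :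
    (spanBasis hJ j : M.carrier) = M.basis j := by
  simp only [spanBasis, Module.Basis.map_apply, Module.Basis.span_apply]
  rfl

theorem repr_spanBasis (hJ : M.SpansSubmodule J) (x : spanSubmodule hJ) (j : J) :
    (spanBasis hJ).repr x j = M.basis.repr x j := by
  let f₁ : spanSubmodule hJ →ₗ[ℤ] ℤ := Finsupp.lapply j ∘ₗ (spanBasis hJ).repr.toLinearMap
  let f₂ : spanSubmodule hJ →ₗ[ℤ] ℤ := Finsupp.lapply j.val ∘ₗ M.basis.repr.toLinearMap ∘ₗ
    (spanSubmodule hJ).subtype.toAddMonoidHom.toIntLinearMap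
  suffices f₁ = f₂ from LinearMap.congr_fun this x
  refine (spanBasis hJ).ext fun k ↦ ?_
  simpa [f₁, f₂, coe_spanBasis] using (Finsupp.single_apply_left Subtype.val_injective _ _ _).symm

-- Reducible, so that `(restrict hJ).carrier` is seen as `spanSubmodule hJ` when rewriting.
noncomputable abbrev restrict (hJ : M.SpansSubmodule J) : ZPlusModule b where
  carrier := spanSubmodule hJ
  κ := J
  basis := spanBasis hJ
  nonneg i j k := by
    rw [repr_spanBasis, Submodule.coe_smul, coe_spanBasis]
    exact M.nonneg i j k

theorem isCompl_spanSubmodule (hJ : M.SpansSubmodule J) (hJc : M.SpansSubmodule Jᶜ) :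
    IsCompl (spanSubmodule hJ) (spanSubmodule hJc) := by
  rw [← isCompl_restrictScalars_iff ℤ]
  exact M.basis.linearIndependent.isCompl_span_image M.basis.span_eq isCompl_compl

theorem decomposable_of_spansSubmodule (hJ : M.SpansSubmodule J) (hJc : M.SpansSubmodule Jᶜ)
    (hJ_ne : J.Nonempty) (hJc_ne : Jᶜ.Nonempty) : M.Decomposable := by
  classical
  refine ⟨restrict hJ, restrict hJc, hJ_ne.to_subtype, hJc_ne.to_subtype,
    (Equiv.Set.sumCompl J).symm, (prodEquivOfIsCompl _ _ (isCompl_spanSubmodule hJ hJc)).symm,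
    fun j ↦ ?_⟩
  by_cases hj : j ∈ J
  · rw [Equiv.Set.sumCompl_symm_apply_of_mem hj, ← coe_spanBasis hJ ⟨j, hj⟩]
    exact prodEquivOfIsCompl_symm_apply_left _ _ _ _
  · rw [Equiv.Set.sumCompl_symm_apply_of_notMem hj, ← coe_spanBasis hJc ⟨j, hj⟩]
    exact prodEquivOfIsCompl_symm_apply_right _ _ _ _

end ZPlusModule

theorem based_module_indecomposable_implies_irreducible_general
    {A : Type} [Ring A] {ι : Type} (b : Module.Basis ι ℤ A)
    (bar : ι → ι)
    (M : ZPlusModule b)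
    (hbased : ∀ (i : ι) (j k : M.κ),
      M.basis.repr (b i • M.basis j) k = M.basis.repr (b (bar i) • M.basis k) j)
    (hindec : ¬ M.Decomposable) :
    M.Irred := by
  intro J (hJ : M.SpansSubmodule J)
  by_contra! hJ_proper
  exact hindec <| ZPlusModule.decomposable_of_spansSubmodule hJ
    (ZPlusModule.SpansSubmodule.compl hbased hJ)
    hJ_proper.1 (Set.nonempty_compl.2 hJ_proper.2)

/-- Lemma 1: a based module with finite basis over a based ring which is
indecomposable as a ℤ₊-module is irreducible as a ℤ₊-module.
The based-ring structure on A consists of: nonnegative structure constants; a subset I₀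
with 1 = Σ_{i ∈ I₀} bᵢ; an involution i ↦ ī inducing an anti-involution cj of A; and the
trace condition τ(bᵢ bⱼ) = δ_{j, ī} where τ(x) = Σ_{i ∈ I₀} (coefficient of bᵢ in x).
The based-module condition is d_{ij}^k = d_{ī k}^j. -/
theorem based_module_indecomposable_implies_irreducible
    {A : Type} [Ring A] {ι : Type} [Fintype ι] [DecidableEq ι] (b : Module.Basis ι ℤ A)
    (hring : ∀ i j k, 0 ≤ b.repr (b i * b j) k)
    (I₀ : Finset ι) (hone : (1 : A) = ∑ i ∈ I₀, b i)
    (bar : ι → ι) (hbar : Function.Involutive bar)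
    (cj : A →ₗ[ℤ] A)
    (hcj_basis : ∀ i, cj (b i) = b (bar i))
    (hcj_mul : ∀ x y, cj (x * y) = cj y * cj x)
    (htau : ∀ i j, (∑ i₀ ∈ I₀, b.repr (b i * b j) i₀) = if j = bar i then 1 else 0)
    (M : ZPlusModule b) [Fintype M.κ]
    (hbased : ∀ (i : ι) (j k : M.κ),
      M.basis.repr (b i • M.basis j) k = M.basis.repr (b (bar i) • M.basis k) j)
    (hindec : ¬ M.Decomposable) :
    M.Irred :=
  based_module_indecomposable_implies_irreducible_general b bar M hbased hindec
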